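/- arXiv:1808.06082 — 2 statements merged into one kernel-verified Lean document; each statement's English description precedes it below -/
import Mathlib

section
/- There exists a computable binary tree T such that [T] is a perfect set and every perfect subtree of T computes the halting problem. Concretely: let m be the modulus function of ∅′, for X ∈ 2^ω let p^X(n) be the position of the n-th 1 in X, and let C = {X ∈ 2^ω : ∀n (p^X is defined at n → p^X(n) ≥ m(n))} ∪ {X : X has finitely many 1s and all 1-positions respect the bound}; then C is a Π⁰₁ class whose members with infinitely many 1s compute ∅′, and any perfect subtree of a tree T with [T] = C computes ∅′. -/
open MeasureTheory

/-- The length-`n` initial segment of `X ∈ 2^ω` as a finite binary string. -/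
def initSeg (X : ℕ → Bool) (n : ℕ) : List Bool := List.ofFn fun i : Fin n => X i

/-- A binary tree: a set of finite binary strings closed under initial segments. -/
def IsTree (T : Set (List Bool)) : Prop := ∀ σ ∈ T, ∀ τ : List Bool, τ <+: σ → τ ∈ T

/-- `[T]`: the set of infinite paths through `T`. -/
def paths (T : Set (List Bool)) : Set (ℕ → Bool) := {X | ∀ n, initSeg X n ∈ T}

/-- `T_σ`: the nodes of `T` comparable with `σ`. -/
def subtree (T : Set (List Bool)) (σ : List Bool) : Set (List Bool) :=
  {τ ∈ T | τ <+: σ ∨ σ <+: τ}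

/-- `T ∩ 2^n`: the strings of length `n` in `T`. -/
def level (T : Set (List Bool)) (n : ℕ) : Set (List Bool) := {σ ∈ T | σ.length = n}

/-- The basic cylinder determined by the string `σ`. -/
def cyl (σ : List Bool) : Set (ℕ → Bool) := {X | initSeg X σ.length = σ}

/-- `μ` is the uniform (coin-flipping) measure on Cantor space:
`μ([σ]) = 2^{-|σ|}` for every string `σ`. -/
def UniformOnCantor (μ : Measure (ℕ → Bool)) : Prop :=
  ∀ σ : List Bool, μ (cyl σ) = (2 : ENNReal)⁻¹ ^ σ.length

/-- A perfect tree: nonempty and every node has two incomparable extensions in the tree. -/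
def IsPerfectTree (T : Set (List Bool)) : Prop :=
  T.Nonempty ∧ ∀ σ ∈ T, ∃ τ₀ ∈ T, ∃ τ₁ ∈ T,
    σ <+: τ₀ ∧ σ <+: τ₁ ∧ ¬ τ₀ <+: τ₁ ∧ ¬ τ₁ <+: τ₀

/-- Codes for oracle partial recursive functions: `Nat.Partrec.Code` with an
extra constructor for the oracle. -/
inductive Codeo : Type
  | zero : Codeo
  | succ : Codeo
  | left : Codeo
  | right : Codeo
  | oracle : Codeo
  | pair : Codeo → Codeo → Codeo
  | comp : Codeo → Codeo → Codeo
  | prec : Codeo → Codeo → Codeo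
  | rfind' : Codeo → Codeo

/-- Evaluation of an oracle code relative to the oracle `O`. -/
def evalo (O : ℕ →. ℕ) : Codeo → ℕ →. ℕ
  | .zero => pure 0
  | .succ => fun n => Part.some (n + 1)
  | .left => fun n => Part.some n.unpair.1
  | .right => fun n => Part.some n.unpair.2
  | .oracle => O
  | .pair cf cg => fun n => Nat.pair <$> evalo O cf n <*> evalo O cg n
  | .comp cf cg => fun n => evalo O cg n >>= evalo O cf
  | .prec cf cg =>
      Nat.unpaired fun a n =>
        n.rec (evalo O cf a) fun y IH => do
          let i ← IH
          evalo O cg (Nat.pair a (Nat.pair y i))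
  | .rfind' cf =>
      Nat.unpaired fun a m =>
        (Nat.rfind fun n => (fun x => x = 0) <$> evalo O cf (Nat.pair a (n + m))).map (· + m)

/-- A fixed injective numbering of oracle codes. -/
def encodeCode : Codeo → ℕ
  | .zero => 0
  | .succ => 1
  | .left => 2
  | .right => 3
  | .oracle => 4
  | .pair cf cg => 4 * Nat.pair (encodeCode cf) (encodeCode cg) + 5
  | .comp cf cg => 4 * Nat.pair (encodeCode cf) (encodeCode cg) + 6
  | .prec cf cg => 4 * Nat.pair (encodeCode cf) (encodeCode cg) + 7
  | .rfind' cf => 4 * encodeCode cf + 8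

/-- Turing reducibility `f ≤_T g` for total functions on `ℕ`:
some oracle code computes `f` relative to `g`. -/
def TuringLE (f g : ℕ → ℕ) : Prop :=
  ∃ c : Codeo, ∀ n, evalo (fun x => Part.some (g x)) c n = Part.some (f n)

/-- `f` is computable iff it is Turing reducible to a trivial oracle. -/
def ComputableInZero (f : ℕ → ℕ) : Prop := TuringLE f fun _ => 0

open Classical in
/-- The Turing jump of (the function) `g`: the halting problem relative to `g`,
as a 0-1 valued function. -/
noncomputable def jump (g : ℕ → ℕ) : ℕ → ℕ := fun e =>
  if ∃ c : Codeo, encodeCode c = e ∧ (evalo (fun x => Part.some (g x)) c e).Dom then 1 else 0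

open Classical in
/-- The characteristic function (as `ℕ → ℕ`) of a set of binary strings,
via the canonical coding of `List Bool` by natural numbers. -/
noncomputable def chi (T : Set (List Bool)) : ℕ → ℕ := fun n =>
  if ((Encodable.decode (α := List Bool) n).elim False fun σ => σ ∈ T) then 1 else 0

/-- The characteristic function (as `ℕ → ℕ`) of an element of Cantor space. -/
def chiX (X : ℕ → Bool) : ℕ → ℕ := fun n => cond (X n) 1 0

/-!
Let `m(n)` be the first stage by which every halting `e < n` has halted. The tree `lateTree`
keeps a string as long as each of its `1`s is late: the `n`-th `1` sits at a position `i` with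
`i ≥ m(n)`, as far as this can be checked by running programs for `|σ|` steps. Its paths are
the sequences all of whose `1`s are late. They form a perfect set: a path can be cut off to
zeros, or a single `1` can be added far enough out, without leaving it.

If `P ⊆ lateTree` is perfect, every node of `P` extends inside `P` to nodes with arbitrarily
many `1`s, hence to arbitrarily long ones. So once a node `σ ∈ P` has a `1` at position `p`
with more than `e` ones before it, extending `σ` past the halting time of `e` shows that `e`
halts iff it halts within `p` steps. Such a node exists for every `e` and can be found by
searching `P`, so `P` computes `∅′`.

Halting within `s` steps is `Nat.Partrec.Code.evaln`, applied to the oracle codes translated into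
`Nat.Partrec.Code` with the oracle read as `0`; on indices, the translation is primitive recursive.
-/

open Encodable
open Nat.Partrec (Code)

namespace Codeo

theorem exists_evalo_eq_of_recursiveIn {O : ℕ →. ℕ} {f : ℕ →. ℕ}
    (hf : Nat.RecursiveIn {O} f) : ∃ c : Codeo, evalo O c = f := by
  induction hf with
  | zero => exact ⟨.zero, rfl⟩
  | succ => exact ⟨.succ, rfl⟩
  | left => exact ⟨.left, rfl⟩
  | right => exact ⟨.right, rfl⟩
  | oracle g hg => exact ⟨.oracle, (Set.mem_singleton_iff.1 hg).symm⟩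
  | pair _ _ hf hg =>
    obtain ⟨cf, rfl⟩ := hf; obtain ⟨cg, rfl⟩ := hg
    exact ⟨.pair cf cg, rfl⟩
  | comp _ _ hf hg =>
    obtain ⟨cf, rfl⟩ := hf; obtain ⟨cg, rfl⟩ := hg
    exact ⟨.comp cf cg, rfl⟩
  | prec _ _ hf hg =>
    obtain ⟨cf, rfl⟩ := hf; obtain ⟨cg, rfl⟩ := hg
    exact ⟨.prec cf cg, rfl⟩
  | rfind _ hf =>
    obtain ⟨cf, rfl⟩ := hf
    -- `rfind` is `rfind'` started at offset `0`
    refine ⟨.comp (.rfind' cf) (.pair (.pair .left .right) .zero), funext fun n => ?_⟩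
    simp [evalo, Seq.seq, pure, PFun.pure, Part.map_id']

end Codeo

theorem TuringLE.of_recursiveIn {f g : ℕ → ℕ}
    (h : Nat.RecursiveIn {fun n => Part.some (g n)} fun n => Part.some (f n)) : TuringLE f g := by
  obtain ⟨c, hc⟩ := Codeo.exists_evalo_eq_of_recursiveIn h
  exact ⟨c, congrFun hc⟩

theorem Nat.RecursiveIn.of_computable {O : Set (ℕ →. ℕ)} {f : ℕ → ℕ} (hf : Computable f) :
    Nat.RecursiveIn O fun n => Part.some (f n) :=
  (Partrec.nat_iff.1 hf.partrec).recursiveIn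

theorem computableInZero_of_computable {f : ℕ → ℕ} (hf : Computable f) : ComputableInZero f :=
  .of_recursiveIn (.of_computable hf)

theorem Nat.RecursiveIn.comp_computable₂ {O : Set (ℕ →. ℕ)} {h : ℕ → ℕ} {F : ℕ → ℕ → ℕ}
    (hF : Computable₂ F) (hh : Nat.RecursiveIn O fun n => Part.some (h n)) :
    Nat.RecursiveIn O fun n => Part.some (F n (h n)) := by
  have hF' : Computable fun m : ℕ => F m.unpair.1 m.unpair.2 :=
    hF.comp (Computable.fst.comp Computable.unpair) (Computable.snd.comp Computable.unpair)
  refine (Nat.RecursiveIn.comp (.of_computable hF')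
    (.pair (.of_computable Computable.id) hh)).of_eq fun n => ?_
  simp [Seq.seq]

theorem Nat.RecursiveIn.oracle_comp {g r : ℕ → ℕ} (hr : Computable r) :
    Nat.RecursiveIn {fun n => Part.some (g n)} fun n => Part.some (g (r n)) :=
  (Nat.RecursiveIn.comp (.oracle (fun n => Part.some (g n)) (Set.mem_singleton _))
    (.of_computable hr)).of_eq fun n => by simp

theorem Nat.rfind_some_eq_find {p : ℕ → Bool} (h : ∃ k, p k = true) :
    Nat.rfind (fun k => Part.some (p k)) = Part.some (Nat.find h) := by
  refine Part.eq_some_iff.2 (Nat.mem_rfind.2 ⟨Part.mem_some_iff.2 (Nat.find_spec h).symm,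
    fun hk => Part.mem_some_iff.2 ?_⟩)
  simpa using Nat.find_min h hk

theorem Nat.RecursiveIn.find {O : Set (ℕ →. ℕ)} {p : ℕ → ℕ → Bool}
    (hp : Nat.RecursiveIn O fun n => Part.some (cond (p n.unpair.1 n.unpair.2) 0 1))
    (hex : ∀ a, ∃ k, p a k = true) :
    Nat.RecursiveIn O fun a => Part.some (Nat.find (hex a)) := by
  refine hp.rfind.of_eq fun a => ?_
  have hmap (b : Bool) :
      (fun m : ℕ => decide (m = 0)) <$> Part.some (cond b 0 1) = Part.some b := by
    cases b <;> simp
  simp only [Nat.unpair_pair, hmap]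
  exact Nat.rfind_some_eq_find (hex a)

theorem Computable.option_elim {α β σ : Type*} [Primcodable α] [Primcodable β] [Primcodable σ]
    {o : α → Option β} {f : α → σ} {g : α → β → σ} (ho : Computable o) (hf : Computable f)
    (hg : Computable₂ g) : Computable fun a => (o a).elim (f a) (g a) :=
  (Computable.option_casesOn ho hf hg).of_eq fun a => by cases o a <;> rfl

theorem TuringLE.of_nat_witness {f g : ℕ → ℕ} {query answer : ℕ → ℕ → ℕ}
    {good : ℕ → ℕ → ℕ → Bool} (hquery : Computable₂ query) (hanswer : Computable₂ answer)
    (hgood : Computable₂ fun (x : ℕ × ℕ) v => good x.1 x.2 v)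
    (hex : ∀ e, ∃ k, good e k (g (query e k)) = true)
    (hcorrect : ∀ e k, good e k (g (query e k)) = true → f e = answer e k) : TuringLE f g := by
  have hpair : Computable Nat.unpair := .unpair
  have hsearch : Nat.RecursiveIn {fun n => Part.some (g n)} fun n =>
      Part.some (cond (good n.unpair.1 n.unpair.2 (g (query n.unpair.1 n.unpair.2))) 0 1) :=
    .comp_computable₂ (F := fun n v => cond (good n.unpair.1 n.unpair.2 v) 0 1)
      (Computable.cond (hgood.comp (hpair.comp .fst) .snd) (.const 0) (.const 1))
      (.oracle_comp (hquery.comp (Computable.fst.comp hpair) (Computable.snd.comp hpair)))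
  exact .of_recursiveIn (((Nat.RecursiveIn.find hsearch hex).comp_computable₂ hanswer).of_eq
    fun e => by rw [hcorrect e _ (Nat.find_spec (hex e))])

theorem TuringLE.of_witness {W : Type*} [Primcodable W] {f g : ℕ → ℕ}
    {query answer : ℕ → W → ℕ} {good : ℕ → W → ℕ → Bool}
    (hquery : Computable₂ query) (hanswer : Computable₂ answer)
    (hgood : Computable fun x : (ℕ × W) × ℕ => good x.1.1 x.1.2 x.2)
    (hex : ∀ e, ∃ w, good e w (g (query e w)) = true)
    (hcorrect : ∀ e w, good e w (g (query e w)) = true → f e = answer e w) : TuringLE f g := by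
  have hdecode : Computable fun x : ℕ × ℕ => decode (α := W) x.2 := Computable.decode.comp .snd
  have hargs : Computable fun x : ((ℕ × ℕ) × ℕ) × W => ((x.1.1.1, x.2), x.1.2) :=
    ((Computable.fst.comp (Computable.fst.comp .fst)).pair .snd).pair (Computable.snd.comp .fst)
  have hgood' : Computable₂ fun (x : (ℕ × ℕ) × ℕ) (w : W) => good x.1.1 w x.2 :=
    (hgood.comp hargs :)
  refine TuringLE.of_nat_witness (query := fun e k => (decode (α := W) k).elim 0 (query e))
    (answer := fun e k => (decode (α := W) k).elim 0 (answer e))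
    (good := fun e k v => (decode (α := W) k).elim false fun w => good e w v)
    (.option_elim hdecode (.const 0) (hquery.comp (Computable.fst.comp .fst) .snd))
    (.option_elim hdecode (.const 0) (hanswer.comp (Computable.fst.comp .fst) .snd))
    (.option_elim (hdecode.comp .fst) (.const false) hgood') (fun e => ?_) (fun e k => ?_)
  · obtain ⟨w, hw⟩ := hex e
    exact ⟨encode w, by simpa [encodek] using hw⟩
  · cases decode (α := W) k with
    | none => simp
    | some w => exact hcorrect e w

namespace Codeo

def ofNatCode : ℕ → Codeo
  | 0 => .zero
  | 1 => .succ
  | 2 => .left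
  | 3 => .right
  | 4 => .oracle
  | n + 5 =>
    let q := n / 4
    match n % 4 with
    | 0 => .pair (ofNatCode q.unpair.1) (ofNatCode q.unpair.2)
    | 1 => .comp (ofNatCode q.unpair.1) (ofNatCode q.unpair.2)
    | 2 => .prec (ofNatCode q.unpair.1) (ofNatCode q.unpair.2)
    | _ + 3 => .rfind' (ofNatCode q)
  decreasing_by
    all_goals
      have := Nat.unpair_left_le (n / 4)
      have := Nat.unpair_right_le (n / 4)
      omega

theorem ofNatCode_encodeCode (c : Codeo) : ofNatCode (encodeCode c) = c := by
  induction c <;> simp [encodeCode, ofNatCode, Nat.mul_add_div, *]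

theorem encodeCode_ofNatCode : ∀ n, encodeCode (ofNatCode n) = n
  | 0 | 1 | 2 | 3 | 4 => by simp [ofNatCode, encodeCode]
  | n + 5 => by
    have h₁ := encodeCode_ofNatCode (n / 4).unpair.1
    have h₂ := encodeCode_ofNatCode (n / 4).unpair.2
    have h := encodeCode_ofNatCode (n / 4)
    have hmod : n % 4 < 4 := Nat.mod_lt _ (by norm_num)
    interval_cases hr : n % 4 <;> simp [ofNatCode, hr, encodeCode, h₁, h₂, h] <;> omega
  decreasing_by
    all_goals
      have := Nat.unpair_left_le (n / 4)
      have := Nat.unpair_right_le (n / 4)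
      omega

def toCode : Codeo → Code
  | .zero | .oracle => .zero
  | .succ => .succ
  | .left => .left
  | .right => .right
  | .pair a b => .pair (toCode a) (toCode b)
  | .comp a b => .comp (toCode a) (toCode b)
  | .prec a b => .prec (toCode a) (toCode b)
  | .rfind' a => .rfind' (toCode a)

theorem eval_toCode (c : Codeo) : (toCode c).eval = evalo (fun _ => Part.some 0) c := by
  induction c <;> simp [toCode, evalo, Nat.Partrec.Code.eval, *] <;> rfl

def toCodeOfNat (e : ℕ) : Code := (ofNatCode e).toCode

/-- The offsets `4, 6, 5, 7` are those of `Nat.Partrec.Code.encodeCode`; index `4` is the oracle,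
read as `zero`. -/
def toCodeOfNatStep (l : List ℕ) : ℕ :=
  let e := l.length
  let q := (e - 5) / 4
  let r := (e - 5) % 4
  if e < 4 then e else if e = 4 then 0 else
    4 * (if r = 3 then l.getD q 0 else Nat.pair (l.getD q.unpair.1 0) (l.getD q.unpair.2 0)) +
      if r = 0 then 4 else if r = 1 then 6 else if r = 2 then 5 else 7

theorem primrec_toCodeOfNatStep : Primrec toCodeOfNatStep := by
  have hlen : Primrec fun l : List ℕ => l.length := Primrec.list_length
  have hq : Primrec fun l : List ℕ => (l.length - 5) / 4 :=
    Primrec.nat_div.comp (Primrec.nat_sub.comp hlen (.const 5)) (.const 4)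
  have hr : Primrec fun l : List ℕ => (l.length - 5) % 4 :=
    Primrec.nat_mod.comp (Primrec.nat_sub.comp hlen (.const 5)) (.const 4)
  have hget {f : List ℕ → ℕ} (hf : Primrec f) : Primrec fun l : List ℕ => l.getD (f l) 0 :=
    (Primrec.list_getD 0).comp .id hf
  have hr_eq (k : ℕ) : PrimrecPred fun l : List ℕ => (l.length - 5) % 4 = k :=
    Primrec.eq.comp hr (.const k)
  have harg := Primrec.ite (hr_eq 3) (hget hq) (Primrec₂.natPair.comp
    (hget (Primrec.fst.comp (Primrec.unpair.comp hq)))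
    (hget (Primrec.snd.comp (Primrec.unpair.comp hq))))
  have hoff := Primrec.ite (hr_eq 0) (.const 4) (Primrec.ite (hr_eq 1) (.const 6)
    (Primrec.ite (hr_eq 2) (.const 5) (.const 7)))
  exact Primrec.ite (Primrec.nat_lt.comp hlen (.const 4)) hlen
    (Primrec.ite (Primrec.eq.comp hlen (.const 4)) (.const 0)
      (Primrec.nat_add.comp (Primrec.nat_mul.comp (.const 4) harg) hoff))

theorem toCodeOfNatStep_map_range (e : ℕ) :
    toCodeOfNatStep ((List.range e).map fun i => encode (toCodeOfNat i)) =
      encode (toCodeOfNat e) := by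
  have hget {i : ℕ} (hi : i < e) :
      ((List.range e).map fun i => encode (toCodeOfNat i)).getD i 0 = encode (toCodeOfNat i) := by
    simp [List.getD_eq_getElem?_getD, List.getElem?_range hi]
  rcases Nat.lt_or_ge e 5 with he | he
  · interval_cases e <;> simp [toCodeOfNatStep, toCodeOfNat, ofNatCode, toCode,
      Nat.Partrec.Code.encodeCode_eq, Nat.Partrec.Code.encodeCode]
  obtain ⟨n, rfl⟩ : ∃ n, e = n + 5 := ⟨e - 5, by omega⟩
  have hq : n / 4 < n + 5 := by omega
  have h₁ := hget ((Nat.unpair_left_le (n / 4)).trans_lt hq)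
  have h₂ := hget ((Nat.unpair_right_le (n / 4)).trans_lt hq)
  have hmod : n % 4 < 4 := Nat.mod_lt _ (by norm_num)
  simp only [toCodeOfNatStep, List.length_map, List.length_range, Nat.add_sub_cancel, hget hq,
    h₁, h₂]
  rw [if_neg (by omega), if_neg (by omega)]
  interval_cases hr : n % 4 <;>
    simp [hr, toCodeOfNat, ofNatCode, toCode, Nat.Partrec.Code.encodeCode_eq,
      Nat.Partrec.Code.encodeCode] <;> ring

theorem primrec_toCodeOfNat : Primrec toCodeOfNat := by
  have hg : Primrec₂ fun (_ : Unit) (l : List ℕ) => some (toCodeOfNatStep l) :=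
    (Primrec.option_some.comp (primrec_toCodeOfNatStep.comp Primrec.snd)).to₂
  have := Primrec.nat_strong_rec (fun (_ : Unit) e => encode (toCodeOfNat e)) hg
    fun _ e => by simpa using toCodeOfNatStep_map_range e
  exact Primrec.encode_iff.1 (this.comp (.const ()) .id)

end Codeo

section Halting
open Nat.Partrec.Code

def Halts (e : ℕ) : Prop := ((Codeo.toCodeOfNat e).eval e).Dom

def haltsWithin (e s : ℕ) : Bool := (evaln s (Codeo.toCodeOfNat e) e).isSome

open Classical in
theorem jump_zero_eq (e : ℕ) : jump (fun _ => 0) e = if Halts e then 1 else 0 := by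
  refine if_congr ⟨?_, fun h => ⟨_, Codeo.encodeCode_ofNatCode e, ?_⟩⟩ rfl rfl
  · rintro ⟨c, rfl, hc⟩
    rwa [Halts, Codeo.toCodeOfNat, Codeo.ofNatCode_encodeCode, Codeo.eval_toCode]
  · rwa [Halts, Codeo.toCodeOfNat, Codeo.eval_toCode] at h

theorem primrec_haltsWithin : Primrec₂ haltsWithin :=
  Primrec.option_isSome.comp (primrec_evaln.comp
    ((Primrec.snd.pair (Codeo.primrec_toCodeOfNat.comp .fst)).pair .fst))

theorem haltsWithin_mono {e s t : ℕ} (hst : s ≤ t) (h : haltsWithin e s) : haltsWithin e t := by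
  obtain ⟨x, hx⟩ := Option.isSome_iff_exists.1 h
  exact Option.isSome_iff_exists.2 ⟨x, evaln_mono hst hx⟩

theorem Halts.of_haltsWithin {e s : ℕ} (h : haltsWithin e s) : Halts e := by
  obtain ⟨x, hx⟩ := Option.isSome_iff_exists.1 h
  exact Part.dom_iff_mem.2 ⟨x, evaln_sound hx⟩

theorem Halts.exists_haltsWithin {e : ℕ} (h : Halts e) : ∃ s, haltsWithin e s := by
  obtain ⟨x, hx⟩ := Part.dom_iff_mem.1 h
  obtain ⟨s, hs⟩ := evaln_complete.1 hx
  exact ⟨s, Option.isSome_iff_exists.2 ⟨x, hs⟩⟩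

theorem exists_forall_lt_haltsWithin (N : ℕ) : ∃ s, ∀ e < N, Halts e → haltsWithin e s := by
  choose! t ht using fun e (h : Halts e) => h.exists_haltsWithin
  exact ⟨(Finset.range N).sup t, fun e he h =>
    haltsWithin_mono (Finset.le_sup (Finset.mem_range.2 he)) (ht e h)⟩

end Halting

/-- The paper's condition `p^X(n) ≥ m(n)` for the `1` of `X` at position `i` (so `n` is the number
of `1`s before `i`), as far as it can be checked by running programs for `s` steps. -/
def LateOne (X : ℕ → Bool) (s i : ℕ) : Prop :=
  X i = true → ∀ e < Nat.count (X · = true) i, haltsWithin e s → haltsWithin e i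

def lateTree : Set (List Bool) := {σ | ∀ i < σ.length, LateOne (σ.getD · false) σ.length i}

theorem LateOne.congr {X Y : ℕ → Bool} {s i : ℕ} (h : LateOne X s i)
    (hXY : ∀ j ≤ i, X j = Y j) : LateOne Y s i := by
  have hcount : Nat.count (Y · = true) i = Nat.count (X · = true) i := by
    simp only [Nat.count_eq_card_filter_range]
    exact congrArg Finset.card (Finset.filter_congr fun j hj => by
      rw [hXY j (Finset.mem_range.1 hj).le])
  rw [LateOne, ← hXY i le_rfl, hcount]
  exact h

theorem LateOne.anti {X : ℕ → Bool} {s t i : ℕ} (h : LateOne X t i) (hst : s ≤ t) :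
    LateOne X s i :=
  fun hi e he hs => h hi e he (haltsWithin_mono hst hs)

theorem LateOne.of_eq_false {X : ℕ → Bool} {s i : ℕ} (h : X i = false) : LateOne X s i :=
  fun hi => by simp [h] at hi

@[simp]
theorem length_initSeg (X : ℕ → Bool) (n : ℕ) : (initSeg X n).length = n := by
  simp [initSeg]

theorem getD_initSeg {X : ℕ → Bool} {n j : ℕ} (h : j < n) : (initSeg X n).getD j false = X j := by
  simp [initSeg, h]

theorem isTree_lateTree : IsTree lateTree := by
  rintro σ hσ τ ⟨ρ, rfl⟩ i hi
  refine ((hσ i (by simp; omega)).anti (by simp)).congr fun j hj => ?_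
  exact List.getD_append _ _ _ _ (hj.trans_lt hi)

theorem mem_paths_lateTree_iff {X : ℕ → Bool} :
    X ∈ paths lateTree ↔ ∀ s i, LateOne X s i := by
  refine ⟨fun hX s i => ?_, fun hX n i hi => ?_⟩
  · have hn : i < max s (i + 1) := by omega
    have := hX (max s (i + 1)) i (by simp [hn])
    rw [length_initSeg] at this
    exact (this.congr fun j hj => getD_initSeg (hj.trans_lt hn)).anti (le_max_left _ _)
  · rw [length_initSeg] at hi ⊢
    exact (hX n i).congr fun j hj => (getD_initSeg (hj.trans_lt hi)).symm

theorem PrimrecPred.imp {α : Type*} [Primcodable α] {p q : α → Prop} (hp : PrimrecPred p)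
    (hq : PrimrecPred q) : PrimrecPred fun a => p a → q a :=
  (hp.not.or hq).of_eq fun _ => imp_iff_not_or.symm

theorem primrec_count_getD :
    Primrec₂ fun (σ : List Bool) (i : ℕ) => Nat.count (σ.getD · false = true) i := by
  have hR : PrimrecRel fun (j : ℕ) (σ : List Bool) => σ.getD j false = true :=
    Primrec.eq.comp ((Primrec.list_getD false).comp .snd .fst) (.const true)
  exact (Primrec.list_length.comp (hR.listFilter.comp (Primrec.list_range.comp .snd) .fst)).of_eq
    fun _ => by simp [Nat.count, List.countP_eq_length_filter]

theorem PrimrecRel.forall_lt_of_bound {α : Type*} [Primcodable α] {R : ℕ → α → Prop}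
    {f : α → ℕ} (hR : PrimrecRel R) (hf : Primrec f) : PrimrecPred fun a => ∀ i < f a, R i a :=
  (hR.forall_mem_list.comp (Primrec.list_range.comp hf) .id).of_eq fun _ => by simp

theorem primrecPred_mem_lateTree : PrimrecPred (· ∈ lateTree) := by
  have hhalts {α : Type} [Primcodable α] {f g : α → ℕ} (hf : Primrec f) (hg : Primrec g) :
      PrimrecPred fun x => haltsWithin (f x) (g x) = true :=
    Primrec.eq.comp (primrec_haltsWithin.comp hf hg) (.const true)
  have hstep : PrimrecRel fun (e : ℕ) (x : ℕ × List Bool) =>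
      haltsWithin e x.2.length = true → haltsWithin e x.1 = true :=
    (hhalts Primrec.fst (Primrec.list_length.comp (Primrec.snd.comp .snd))).imp
      (hhalts Primrec.fst (Primrec.fst.comp .snd))
  have hbit : PrimrecRel fun (i : ℕ) (σ : List Bool) => σ.getD i false = true :=
    Primrec.eq.comp ((Primrec.list_getD false).comp .snd .fst) (.const true)
  have hlate : PrimrecRel fun (i : ℕ) (σ : List Bool) => LateOne (σ.getD · false) σ.length i :=
    hbit.imp (hstep.forall_lt_of_bound (primrec_count_getD.comp .snd .fst))
  exact hlate.forall_lt_of_bound Primrec.list_length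

theorem primrec_chi {T : Set (List Bool)} (hT : PrimrecPred (· ∈ T)) : Primrec (chi T) := by
  obtain ⟨_, hdec⟩ := hT
  refine (Primrec.cond (Primrec.option_casesOn Primrec.decode (.const false)
    (hdec.comp .snd).to₂) (.const 1) (.const 0)).of_eq fun n => ?_
  simp only [chi]
  rcases Encodable.decode (α := List Bool) n with _ | σ
  · simp
  · by_cases h : σ ∈ T <;> simp [h]

theorem chi_encode_eq_one_iff {T : Set (List Bool)} {σ : List Bool} :
    chi T (encode σ) = 1 ↔ σ ∈ T := by
  by_cases h : σ ∈ T <;> simp [chi, h]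

theorem initSeg_congr {X Y : ℕ → Bool} {n : ℕ} (h : ∀ j < n, X j = Y j) :
    initSeg X n = initSeg Y n :=
  congrArg List.ofFn (funext fun j => h j j.2)

theorem isOpen_setOf_initSeg_mem (T : Set (List Bool)) (n : ℕ) :
    IsOpen {X : ℕ → Bool | initSeg X n ∈ T} :=
  isOpen_iff_forall_mem_open.2 fun X hX => ⟨PiNat.cylinder X n,
    fun Y hY => by simpa [initSeg_congr (PiNat.mem_cylinder_iff.1 hY)] using hX,
    PiNat.isOpen_cylinder _ X n, PiNat.self_mem_cylinder X n⟩

theorem isClosed_paths (T : Set (List Bool)) : IsClosed (paths T) := by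
  have : paths T = ⋂ n, {X : ℕ → Bool | initSeg X n ∈ Tᶜ}ᶜ := by ext; simp [paths]
  exact this ▸ isClosed_iInter fun n => (isOpen_setOf_initSeg_mem Tᶜ n).isClosed_compl

theorem preperfect_of_exists_ne_mem_cylinder {α : Type*} [TopologicalSpace α]
    [DiscreteTopology α] {C : Set (ℕ → α)}
    (h : ∀ X ∈ C, ∀ N, ∃ Y ∈ C, Y ≠ X ∧ Y ∈ PiNat.cylinder X N) : Preperfect C := by
  refine preperfect_iff_nhds.2 fun X hX U hU => ?_
  obtain ⟨_, ⟨x, N, rfl⟩, hXx, hsub⟩ :=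
    (PiNat.isTopologicalBasis_cylinders fun _ => α).mem_nhds_iff.1 hU
  obtain ⟨Y, hYC, hYX, hYN⟩ := h X hX N
  rw [← PiNat.mem_cylinder_iff_eq.1 hXx] at hsub
  exact ⟨Y, ⟨hsub hYN, hYC⟩, hYX⟩

theorem Nat.count_le_of_forall_lt {p : ℕ → Prop} [DecidablePred p] {i N : ℕ}
    (h : ∀ j < i, p j → j < N) : Nat.count p i ≤ N := by
  rw [Nat.count_eq_card_filter_range]
  refine (Finset.card_le_card fun j hj => ?_).trans (Finset.card_range N).le
  obtain ⟨hji, hj⟩ := Finset.mem_filter.1 hj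
  exact Finset.mem_range.2 (h j (Finset.mem_range.1 hji) hj)

theorem lateOne_update_of_forall_lt {Y : ℕ → Bool} {N Q s : ℕ}
    (hY : ∀ j < Q, Y j = true → j < N) (hQ : ∀ e < N, Halts e → haltsWithin e Q) :
    LateOne (Function.update Y Q true) s Q := by
  refine fun _ e he hs => hQ e (he.trans_le (Nat.count_le_of_forall_lt fun j hj hYj => ?_))
    (.of_haltsWithin hs)
  rw [Function.update_of_ne hj.ne] at hYj
  exact hY j hj hYj

theorem exists_ne_mem_paths_lateTree {X : ℕ → Bool} (hX : X ∈ paths lateTree) (N : ℕ) :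
    ∃ Y ∈ paths lateTree, Y ≠ X ∧ Y ∈ PiNat.cylinder X N := by
  -- The truncation `Y` of `X` to `[0, N)` and `Y` with an extra `1` at the late position `Q`
  -- are both paths; as they differ, one of them differs from `X`.
  rw [mem_paths_lateTree_iff] at hX
  obtain ⟨s, hs⟩ := exists_forall_lt_haltsWithin N
  set Q := max s N
  let Y : ℕ → Bool := fun j => decide (j < N) && X j
  let Z := Function.update Y Q true
  have hYX : ∀ j < N, Y j = X j := fun j hj => by simp [Y, hj]
  have hZY : ∀ j ≠ Q, Z j = Y j := fun j hj => Function.update_of_ne hj _ _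
  have hZX : ∀ j < N, Z j = X j := fun j hj => (hZY j (by omega)).trans (hYX j hj)
  have hY : Y ∈ paths lateTree := mem_paths_lateTree_iff.2 fun t i => by
    by_cases hi : i < N
    · exact (hX t i).congr fun j hj => (hYX j (by omega)).symm
    · exact .of_eq_false (by simp [Y, hi])
  have hZ : Z ∈ paths lateTree := mem_paths_lateTree_iff.2 fun t i => by
    by_cases hi : i < N
    · exact (hX t i).congr fun j hj => (hZX j (by omega)).symm
    by_cases hiQ : i = Q
    · subst hiQ
      exact lateOne_update_of_forall_lt (fun j _ hj => by simp_all [Y])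
        fun e he h => haltsWithin_mono (le_max_left s N) (hs e he h)
    · exact .of_eq_false (by simp [hZY i hiQ, Y, hi])
  by_cases hYX' : Y = X
  · refine ⟨Z, hZ, fun hZX' => ?_, PiNat.mem_cylinder_iff.2 hZX⟩
    have : Z Q = Y Q := by rw [hYX', hZX']
    simp [Z, Y, Q] at this
  · exact ⟨Y, hY, hYX', PiNat.mem_cylinder_iff.2 hYX⟩

theorem perfect_paths_lateTree : Perfect (paths lateTree) :=
  ⟨isClosed_paths _,
    preperfect_of_exists_ne_mem_cylinder fun _ hX => exists_ne_mem_paths_lateTree hX⟩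

theorem const_false_mem_paths_lateTree : (fun _ => false) ∈ paths lateTree :=
  mem_paths_lateTree_iff.2 fun _ _ => .of_eq_false rfl

theorem List.eq_replicate_false_of_true_notMem {ρ : List Bool} (h : true ∉ ρ) :
    ρ = List.replicate ρ.length false :=
  List.eq_replicate_iff.2 ⟨rfl, fun b hb => by cases b <;> simp_all⟩

theorem List.replicate_prefix_replicate_of_le {α : Type*} (a : α) {m n : ℕ} (h : m ≤ n) :
    List.replicate m a <+: List.replicate n a :=
  ⟨List.replicate (n - m) a, by rw [← List.replicate_add]; congr; omega⟩

theorem count_getD_length (σ : List Bool) :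
    Nat.count (σ.getD · false = true) σ.length = σ.count true := by
  induction σ with
  | nil => simp
  | cons b σ ih =>
    rw [List.length_cons, Nat.count_succ', List.count_cons]
    simp only [List.getD_cons_succ, List.getD_cons_zero, ih]
    cases b <;> simp

namespace IsPerfectTree

variable {P : Set (List Bool)}

theorem exists_append_mem_true_mem (hP : IsPerfectTree P) {σ : List Bool} (hσ : σ ∈ P) :
    ∃ ρ, σ ++ ρ ∈ P ∧ true ∈ ρ := by
  obtain ⟨_, h₀, _, h₁, ⟨ρ₀, rfl⟩, ⟨ρ₁, rfl⟩, h₀₁, h₁₀⟩ := hP.2 σ hσ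
  by_contra! hfalse
  rw [List.prefix_append_right_inj, List.eq_replicate_false_of_true_notMem (hfalse _ h₀),
    List.eq_replicate_false_of_true_notMem (hfalse _ h₁)] at h₀₁ h₁₀
  rcases le_total ρ₀.length ρ₁.length with h | h
  · exact h₀₁ (List.replicate_prefix_replicate_of_le _ h)
  · exact h₁₀ (List.replicate_prefix_replicate_of_le _ h)

theorem exists_append_mem_le_count (hP : IsPerfectTree P) {σ : List Bool} (hσ : σ ∈ P) (k : ℕ) :
    ∃ ρ, σ ++ ρ ∈ P ∧ k ≤ ρ.count true := by
  induction k with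
  | zero => exact ⟨[], by simpa using hσ, Nat.zero_le _⟩
  | succ k ih =>
    obtain ⟨ρ, hρ, hk⟩ := ih
    obtain ⟨ρ', hρ', htrue⟩ := hP.exists_append_mem_true_mem hρ
    refine ⟨ρ ++ ρ', by simpa using hρ', ?_⟩
    have := List.count_pos_iff.2 htrue
    rw [List.count_append]
    omega

theorem exists_mem_lt_count (hP : IsPerfectTree P) (k : ℕ) :
    ∃ σ ∈ P, k < Nat.count (σ.getD · false = true) σ.length := by
  obtain ⟨σ, hσ⟩ := hP.1
  obtain ⟨ρ, hρ, hk⟩ := hP.exists_append_mem_le_count hσ (k + 1)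
  refine ⟨σ ++ ρ, hρ, ?_⟩
  rw [count_getD_length, List.count_append]
  omega

end IsPerfectTree

abbrev OneOfRankAbove (e : ℕ) (σ : List Bool) (p : ℕ) : Prop :=
  p < σ.length ∧ σ.getD p false = true ∧ e < Nat.count (σ.getD · false = true) p

theorem primrecPred_oneOfRankAbove :
    PrimrecPred fun x : ℕ × List Bool × ℕ => OneOfRankAbove x.1 x.2.1 x.2.2 := by
  have hσ : Primrec fun x : ℕ × List Bool × ℕ => x.2.1 := Primrec.fst.comp .snd
  have hp : Primrec fun x : ℕ × List Bool × ℕ => x.2.2 := Primrec.snd.comp .snd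
  exact (Primrec.nat_lt.comp hp (Primrec.list_length.comp hσ)).and
    ((Primrec.eq.comp ((Primrec.list_getD false).comp hσ hp) (.const true)).and
      (Primrec.nat_lt.comp .fst (primrec_count_getD.comp hσ hp)))

theorem IsPerfectTree.exists_oneOfRankAbove {P : Set (List Bool)} (hP : IsPerfectTree P)
    (e : ℕ) : ∃ σ ∈ P, ∃ p, OneOfRankAbove e σ p := by
  obtain ⟨σ, hσ, hcount⟩ := hP.exists_mem_lt_count (e + 1)
  have hcard : ∀ hf : (Set.ofPred (σ.getD · false = true)).Finite, e + 1 < hf.toFinset.card :=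
    fun hf => hcount.trans_le (Nat.count_le_card hf _)
  refine ⟨σ, hσ, Nat.nth (σ.getD · false = true) (e + 1), Nat.nth_lt_of_lt_count hcount,
    Nat.nth_mem _ hcard, ?_⟩
  rw [Nat.count_nth hcard]
  exact Nat.lt_succ_self e

section Reduction

variable {P : Set (List Bool)}

theorem halts_iff_haltsWithin (hPT : P ⊆ lateTree) (hP : IsPerfectTree P) {σ : List Bool}
    (hσ : σ ∈ P) {e p : ℕ} (h : OneOfRankAbove e σ p) : Halts e ↔ haltsWithin e p := by
  obtain ⟨hp, hbit, he⟩ := h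
  refine ⟨fun h => ?_, .of_haltsWithin⟩
  obtain ⟨s, hs⟩ := h.exists_haltsWithin
  obtain ⟨ρ, hρ, hsρ⟩ := hP.exists_append_mem_le_count hσ s
  have hlate : LateOne (σ.getD · false) (σ ++ ρ).length p :=
    (hPT hρ p (by simp; omega)).congr fun j hj => List.getD_append _ _ _ _ (by omega)
  have hlen : s ≤ (σ ++ ρ).length := by
    have := List.count_le_length (a := true) (l := ρ)
    simp only [List.length_append]
    omega
  exact hlate hbit e he (haltsWithin_mono hlen hs)

theorem turingLE_jump_zero_chi (hPT : P ⊆ lateTree) (hP : IsPerfectTree P) :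
    TuringLE (jump fun _ => 0) (chi P) := by
  have hgood : PrimrecPred fun x : (ℕ × (List Bool × ℕ)) × ℕ =>
      x.2 = 1 ∧ OneOfRankAbove x.1.1 x.1.2.1 x.1.2.2 :=
    (Primrec.eq.comp .snd (.const 1)).and (primrecPred_oneOfRankAbove.comp .fst)
  refine TuringLE.of_witness (W := List Bool × ℕ) (query := fun _ w => encode w.1)
    (answer := fun e w => cond (haltsWithin e w.2) 1 0)
    (good := fun e w v => decide (v = 1 ∧ OneOfRankAbove e w.1 w.2))
    (Computable.encode.comp (Computable.fst.comp .snd))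
    (.cond (primrec_haltsWithin.to_comp.comp .fst (Computable.snd.comp .snd)) (.const 1)
      (.const 0))
    hgood.decide.to_comp (fun e => ?_) (fun e w h => ?_)
  · obtain ⟨σ, hσ, p, hp⟩ := hP.exists_oneOfRankAbove e
    exact ⟨(σ, p), decide_eq_true ⟨chi_encode_eq_one_iff.2 hσ, hp⟩⟩
  · obtain ⟨hchi, hp⟩ := of_decide_eq_true h
    rw [jump_zero_eq, halts_iff_haltsWithin hPT hP (chi_encode_eq_one_iff.1 hchi) hp]
    cases haltsWithin e w.2 <;> simp

end Reduction

/-- There is a computable binary tree `T` whose path set is a (nonempty) perfect subset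
of Cantor space, such that every perfect subtree of `T` computes the halting problem
`∅′ = jump (fun _ => 0)`. -/
theorem stmt8 :
    ∃ T : Set (List Bool), IsTree T ∧ ComputableInZero (chi T) ∧
      Perfect (paths T) ∧ (paths T).Nonempty ∧
      ∀ P : Set (List Bool), IsTree P → P ⊆ T → IsPerfectTree P →
        TuringLE (jump fun _ => 0) (chi P) :=
  ⟨lateTree, isTree_lateTree,
    computableInZero_of_computable (primrec_chi primrecPred_mem_lateTree).to_comp,
    perfect_paths_lateTree, ⟨_, const_false_mem_paths_lateTree⟩,
    fun _ _ hPT hP => turingLE_jump_zero_chi hPT hP⟩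
end

section
/- Let f: 2^{<ω} → {0,…,k−1} be a finite coloring of the full binary tree and suppose i < k is a color such that the set A = {X ∈ 2^ω : ∀m ∃n > m, f(X↾n) = i} has positive outer measure. If P is a perfect tree with [P] ⊆ A, then the set {τ ∈ P : f(τ) = i} contains a perfect subtree; in particular there exists an f-homogeneous perfect tree with color i. -/
open MeasureTheory

/-!
Since every node of the perfect tree `P` lies on a path, and color `i` occurs along every path
beyond any given length, every node of `P` has an extension in `S = {τ ∈ P | f τ = i}`.
Extending the two incomparable extensions that `P` provides above a node of `S` into `S` shows
that every node of `S` has two incomparable extensions in `S`. Iterating this splitting from a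
node of `S` yields the embedded copy of `2^{<ω}`.
-/

theorem initSeg_prefix_initSeg (X : ℕ → Bool) {m n : ℕ} (h : m ≤ n) :
    initSeg X m <+: initSeg X n := by
  obtain ⟨d, rfl⟩ := Nat.exists_eq_add_of_le h
  rw [initSeg, initSeg, List.ofFn_add]
  exact List.prefix_append _ _

theorem exists_initSeg_eq_of_chain (c : ℕ → List Bool) (hc : ∀ n, c n <+: c (n + 1))
    (hlen : ∀ n, n ≤ (c n).length) : ∃ X : ℕ → Bool, ∀ n, initSeg X (c n).length = c n := by
  have hchain : ∀ ⦃m n⦄, m ≤ n → c m <+: c n :=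
    Nat.rel_of_forall_rel_succ_of_le (fun a b : List Bool => a <+: b) hc
  refine ⟨fun j => (c (j + 1)).getD j false, fun n => List.ext_getElem (by simp [initSeg]) ?_⟩
  intro j hj hjn
  have hj' : j < (c (j + 1)).length := hlen (j + 1)
  simp only [initSeg, List.getElem_ofFn, List.getD_eq_getElem _ _ hj']
  rcases le_total (j + 1) n with h | h
  · exact (hchain h).getElem hj'
  · exact ((hchain h).getElem hjn).symm

theorem IsPerfectTree.exists_append_singleton_mem {P : Set (List Bool)} (hP : IsTree P)
    (hperf : IsPerfectTree P) {σ : List Bool} (hσ : σ ∈ P) : ∃ b, σ ++ [b] ∈ P := by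
  obtain ⟨τ₀, hτ₀, τ₁, -, ⟨v, rfl⟩, hστ₁, hinc, -⟩ := hperf.2 σ hσ
  cases v with
  | nil => exact absurd (by simpa using hστ₁) hinc
  | cons b v => exact ⟨b, hP _ hτ₀ _ ⟨v, by simp⟩⟩

theorem IsTree.exists_mem_paths_cyl {P : Set (List Bool)} (hP : IsTree P)
    (hext : ∀ σ ∈ P, ∃ b, σ ++ [b] ∈ P) {σ : List Bool} (hσ : σ ∈ P) :
    ∃ X ∈ paths P, X ∈ cyl σ := by
  choose! next hnext using hext
  let c : ℕ → List Bool := fun n => (fun τ => τ ++ [next τ])^[n] σ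
  have hsucc : ∀ n, c (n + 1) = c n ++ [next (c n)] := fun n =>
    Function.iterate_succ_apply' _ n σ
  have hmem : ∀ n, c n ∈ P := by
    intro n
    induction n with
    | zero => exact hσ
    | succ n ih => rw [hsucc]; exact hnext _ ih
  have hlen : ∀ n, (c n).length = σ.length + n := by
    intro n
    induction n with
    | zero => rfl
    | succ n ih => rw [hsucc, List.length_append, ih]; rfl
  obtain ⟨X, hX⟩ := exists_initSeg_eq_of_chain c (fun n => hsucc n ▸ List.prefix_append _ _)
    (fun n => by rw [hlen]; omega)
  refine ⟨X, fun m => hP _ (hmem m) _ ?_, hX 0⟩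
  rw [← hX m]
  exact initSeg_prefix_initSeg X (by rw [hlen]; omega)

theorem IsPerfectTree.exists_extension_of_frequently {P : Set (List Bool)}
    {Q : List Bool → Prop} (hP : IsTree P) (hperf : IsPerfectTree P)
    (hQ : paths P ⊆ {X : ℕ → Bool | ∀ m, ∃ n > m, Q (initSeg X n)})
    {σ : List Bool} (hσ : σ ∈ P) : ∃ τ ∈ P, σ <+: τ ∧ Q τ := by
  obtain ⟨X, hXP, hXσ⟩ :=
    hP.exists_mem_paths_cyl (fun _ h => hperf.exists_append_singleton_mem hP h) hσ
  obtain ⟨n, hn, hQn⟩ := hQ hXP σ.length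
  exact ⟨initSeg X n, hXP n, hXσ ▸ initSeg_prefix_initSeg X hn.le, hQn⟩

theorem not_prefix_of_incomparable_of_prefix {α : Type*} {τ₀ τ₁ υ₀ υ₁ : List α}
    (h₀ : τ₀ <+: υ₀) (h₁ : τ₁ <+: υ₁) (h₀₁ : ¬ τ₀ <+: τ₁) (h₁₀ : ¬ τ₁ <+: τ₀) :
    ¬ υ₀ <+: υ₁ := fun h =>
  (List.prefix_or_prefix_of_prefix (h₀.trans h) h₁).elim h₀₁ h₁₀

theorem IsPerfectTree.of_dense {P S : Set (List Bool)} (hperf : IsPerfectTree P)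
    (hSP : S ⊆ P) (hdense : ∀ σ ∈ P, ∃ τ ∈ S, σ <+: τ) : IsPerfectTree S := by
  refine ⟨?_, fun σ hσ => ?_⟩
  · obtain ⟨σ, hσ⟩ := hperf.1
    obtain ⟨τ, hτ, -⟩ := hdense σ hσ
    exact ⟨τ, hτ⟩
  obtain ⟨τ₀, hτ₀, τ₁, hτ₁, hστ₀, hστ₁, h₀₁, h₁₀⟩ := hperf.2 σ (hSP hσ)
  obtain ⟨υ₀, hυ₀, hτυ₀⟩ := hdense τ₀ hτ₀
  obtain ⟨υ₁, hυ₁, hτυ₁⟩ := hdense τ₁ hτ₁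
  exact ⟨υ₀, hυ₀, υ₁, hυ₁, hστ₀.trans hτυ₀, hστ₁.trans hτυ₁,
    not_prefix_of_incomparable_of_prefix hτυ₀ hτυ₁ h₀₁ h₁₀,
    not_prefix_of_incomparable_of_prefix hτυ₁ hτυ₀ h₁₀ h₀₁⟩

theorem exists_split_of_not_prefix :
    ∀ {σ τ : List Bool}, ¬ σ <+: τ → ∃ u b, u ++ [b] <+: σ ∧ (τ = u ∨ u ++ [!b] <+: τ)
  | [], _, h => absurd List.nil_prefix h
  | x :: σ, [], _ => ⟨[], x, by simp, Or.inl rfl⟩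
  | x :: σ, y :: τ, h => by
    by_cases hxy : x = y
    · subst hxy
      obtain ⟨u, b, hσ, hτ⟩ := exists_split_of_not_prefix (σ := σ) (τ := τ) (by simpa using h)
      refine ⟨x :: u, b, by simpa using hσ, ?_⟩
      rcases hτ with rfl | hτ
      · exact Or.inl rfl
      · exact Or.inr (by simpa using hτ)
    · exact ⟨[], x, by simp, Or.inr (by cases x <;> cases y <;> simp_all)⟩

theorem prefix_iff_of_splitting (e : List Bool → List Bool)
    (hstep : ∀ σ b, e σ <+: e (σ ++ [b])) (hsplit : ∀ σ b, ¬ e (σ ++ [b]) <+: e (σ ++ [!b]))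
    (σ τ : List Bool) : σ <+: τ ↔ e σ <+: e τ := by
  have hmono : ∀ σ u, e σ <+: e (σ ++ u) := by
    intro σ u
    induction u generalizing σ with
    | nil => simp
    | cons b u ih => simpa using (hstep σ b).trans (ih (σ ++ [b]))
  refine ⟨fun ⟨u, hu⟩ => hu ▸ hmono σ u, fun h => ?_⟩
  by_contra hστ
  obtain ⟨u, b, ⟨s, rfl⟩, hτ⟩ := exists_split_of_not_prefix hστ
  have hb : e (u ++ [b]) <+: e τ := (hmono _ s).trans h
  rcases hτ with hτu | ⟨t, rfl⟩
  · rw [hτu] at hb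
    exact hsplit u b (hb.trans (hstep u !b))
  · rcases List.prefix_or_prefix_of_prefix hb (hmono _ t) with hbc | hcb
    · exact hsplit u b hbc
    · exact hsplit u (!b) (by simpa using hcb)

theorem IsPerfectTree.exists_embedding {S : Set (List Bool)} (hS : IsPerfectTree S) :
    ∃ e : List Bool → List Bool, (∀ σ, e σ ∈ S) ∧ ∀ σ τ, σ <+: τ ↔ e σ <+: e τ := by
  obtain ⟨ρ, hρ⟩ := hS.1
  choose! t₀ ht₀ t₁ ht₁ hp₀ hp₁ h₀₁ h₁₀ using hS.2
  let e : List Bool → List Bool := fun σ => σ.foldl (fun τ b => cond b (t₁ τ) (t₀ τ)) ρ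
  have happend : ∀ σ b, e (σ ++ [b]) = cond b (t₁ (e σ)) (t₀ (e σ)) := fun σ b =>
    List.foldl_concat _ _ _ _
  have hmem : ∀ σ, e σ ∈ S := by
    intro σ
    induction σ using List.reverseRecOn with
    | nil => exact hρ
    | append_singleton σ b ih =>
      cases b <;> simp only [happend, cond_false, cond_true]
      exacts [ht₀ _ ih, ht₁ _ ih]
  refine ⟨e, hmem, prefix_iff_of_splitting e (fun σ b => ?_) (fun σ b => ?_)⟩
  · cases b <;> simp only [happend, cond_false, cond_true]
    exacts [hp₀ _ (hmem σ), hp₁ _ (hmem σ)]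
  · cases b <;> simp only [happend, cond_false, cond_true, Bool.not_false, Bool.not_true]
    exacts [h₀₁ _ (hmem σ), h₁₀ _ (hmem σ)]

theorem stmt17_general (k : ℕ) (f : List Bool → Fin k) (i : Fin k)
    (P : Set (List Bool)) (hP : IsTree P) (hperf : IsPerfectTree P)
    (hPA : paths P ⊆ {X : ℕ → Bool | ∀ m, ∃ n > m, f (initSeg X n) = i}) :
    ∃ e : List Bool → List Bool, (∀ σ, e σ ∈ P ∧ f (e σ) = i) ∧
      ∀ σ τ : List Bool, (σ <+: τ ↔ e σ <+: e τ) := by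
  have hdense : ∀ σ ∈ P, ∃ τ ∈ {τ ∈ P | f τ = i}, σ <+: τ := fun σ hσ => by
    obtain ⟨τ, hτ, hστ, hfτ⟩ := hperf.exists_extension_of_frequently (Q := (f · = i)) hP hPA hσ
    exact ⟨τ, ⟨hτ, hfτ⟩, hστ⟩
  exact (hperf.of_dense (fun _ h => h.1) hdense).exists_embedding

/-- If `A = {X : color i appears infinitely often along X}` has positive outer measure and
`P` is a perfect tree with `[P] ⊆ A`, then `{τ ∈ P : f τ = i}` contains a perfect subtree:
there is an embedded copy of `2^{<ω}` inside `P` on which `f` is constantly `i`. -/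
theorem stmt17 (μ : Measure (ℕ → Bool)) (hμ : UniformOnCantor μ)
    (k : ℕ) (f : List Bool → Fin k) (i : Fin k)
    (hA : 0 < μ {X : ℕ → Bool | ∀ m, ∃ n > m, f (initSeg X n) = i})
    (P : Set (List Bool)) (hP : IsTree P) (hperf : IsPerfectTree P)
    (hPA : paths P ⊆ {X : ℕ → Bool | ∀ m, ∃ n > m, f (initSeg X n) = i}) :
    ∃ e : List Bool → List Bool, (∀ σ, e σ ∈ P ∧ f (e σ) = i) ∧
      ∀ σ τ : List Bool, (σ <+: τ ↔ e σ <+: e τ) :=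
  stmt17_general k f i P hP hperf hPA
end
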